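/- Let R be a locally bounded k-category with ordinary quiver Q, and g, h automorphisms of R coinciding on objects. Then the following are equivalent: (1) there is a map ρ: Obj(R) → k^× with ρ(y)g(f) = h(f)ρ(x) for all f ∈ R(x,y); (2) (a) for each arrow α: x → y of Q there is c_{x,y} ∈ k^× with (g^{-1}h)(ᾱ) = c_{x,y}·ᾱ, and (b) for every cycle C in Q, the product (g^{-1}h)_C of the scalars along C (inverting on inverse arrows) equals 1. -/

import Mathlib

/-! If `ρ(y) g(f) = h(f) ρ(x)` for all `f`, then `c_{x,y} := ρ(y) ρ(x)⁻¹` works, and its product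
along a closed walk telescopes to `1`. Conversely, if all cycle products are `1`, the product along
a walk depends only on its endpoints; fixing a base point in each connected component of `Q` yields
a potential `ρ` with `ρ(t α) = ρ(s α) c_α`. The morphisms `f` with `ρ(y) g(f) = h(f) ρ(x)` form a
subspace closed under composition that contains every `ᾱ`, hence, as the `ᾱ` generate `R`,
everything. -/

open CategoryTheory

/-- A letter of the double quiver: an arrow together with an orientation
(`true` = the arrow itself, `false` = its formal inverse). -/
abbrev Letter (A : Type) := A × Bool

variable {V A : Type}

/-- Source of a letter of the double quiver. -/
def lsrc (s t : A → V) (l : Letter A) : V := if l.2 then s l.1 else t l.1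

/-- Target of a letter of the double quiver. -/
def ltgt (s t : A → V) (l : Letter A) : V := if l.2 then t l.1 else s l.1

/-- A walk in the quiver `(V, A, s, t)`, written in order of traversal. -/
def IsWalk (s t : A → V) (w : List (Letter A)) : Prop :=
  w.Chain' fun p q => ltgt s t p = lsrc s t q

/-- A cycle: a nonempty walk whose endpoint is its starting point. -/
def IsCycle (s t : A → V) (w : List (Letter A)) : Prop :=
  w ≠ [] ∧ IsWalk s t w ∧
    ∀ a ∈ w.head?, ∀ b ∈ w.getLast?, ltgt s t b = lsrc s t a

/-- The multiplicative value of a family of units on a walk, inverting on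
inverse letters. -/
def wval {k : Type} [Field k] (φ : A → kˣ) (w : List (Letter A)) : kˣ :=
  (w.map fun l => if l.2 then φ l.1 else (φ l.1)⁻¹).prod

variable {k : Type} [Field k] {C : Type} [Category C] [Preadditive C]
  [CategoryTheory.Linear k C]

/-- A strict `k`-linear automorphism of `C` with prescribed action `σ` on objects. -/
structure LinAutOn (k : Type) [Field k] (C : Type) [Category C] [Preadditive C]
    [CategoryTheory.Linear k C] (σ : Equiv.Perm C) where
  map : ∀ {x y : C}, (x ⟶ y) → (σ x ⟶ σ y)
  map_id : ∀ x : C, map (𝟙 x) = 𝟙 (σ x)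
  map_comp : ∀ {x y z : C} (f : x ⟶ y) (g : y ⟶ z), map (f ≫ g) = map f ≫ map g
  map_add : ∀ {x y : C} (f g : x ⟶ y), map (f + g) = map f + map g
  map_smul : ∀ {x y : C} (c : k) (f : x ⟶ y), map (c • f) = c • map f
  bij : ∀ x y : C, Function.Bijective (map (x := x) (y := y))

/-- Morphisms of `R` which are composites of the images `ᾱ` of arrows of `Q`. -/
inductive IsPathMap {Arr : Type} (src tgt : Arr → C) (bar : ∀ a : Arr, src a ⟶ tgt a) :
    ∀ {x y : C}, (x ⟶ y) → Prop
  | id (x : C) : IsPathMap src tgt bar (𝟙 x)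
  | cons (a : Arr) {y : C} (p : tgt a ⟶ y) :
      IsPathMap src tgt bar p → IsPathMap src tgt bar (bar a ≫ p)

/-- Two objects are neighbours if there is a nonzero morphism between them. -/
def Neighbour (x y : C) : Prop :=
  (∃ f : x ⟶ y, f ≠ 0) ∨ (∃ f : y ⟶ x, f ≠ 0)

section Walks

def letterVal (φ : A → kˣ) (l : Letter A) : kˣ := if l.2 then φ l.1 else (φ l.1)⁻¹

def Letter.rev (l : Letter A) : Letter A := (l.1, !l.2)

variable {s t : A → V}

lemma wval_eq_prod_map_letterVal (φ : A → kˣ) (w : List (Letter A)) :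
    wval φ w = (w.map (letterVal φ)).prod := rfl

lemma lsrc_rev (l : Letter A) : lsrc s t (Letter.rev l) = ltgt s t l := by
  cases l with | mk a b => cases b <;> rfl

lemma ltgt_rev (l : Letter A) : ltgt s t (Letter.rev l) = lsrc s t l := by
  cases l with | mk a b => cases b <;> rfl

lemma letterVal_rev (φ : A → kˣ) (l : Letter A) :
    letterVal φ (Letter.rev l) = (letterVal φ l)⁻¹ := by
  cases l with | mk a b => cases b <;> simp [letterVal, Letter.rev]

lemma letterVal_coboundary (ρ : V → kˣ) (l : Letter A) :
    letterVal (fun a => ρ (t a) * (ρ (s a))⁻¹) l = ρ (ltgt s t l) * (ρ (lsrc s t l))⁻¹ := by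
  cases l with | mk a b => cases b <;> simp [letterVal, lsrc, ltgt]

lemma wval_coboundary_of_isWalk (ρ : V → kˣ) :
    ∀ (l : Letter A) (w : List (Letter A)), IsWalk s t (l :: w) →
      wval (fun a => ρ (t a) * (ρ (s a))⁻¹) (l :: w) =
        ρ (ltgt s t ((l :: w).getLast (List.cons_ne_nil l w))) * (ρ (lsrc s t l))⁻¹
  | l, [], _ => by simp [wval_eq_prod_map_letterVal, letterVal_coboundary]
  | l, l' :: w, hw => by
    rw [IsWalk, List.Chain', List.isChain_cons_cons] at hw
    rw [wval_eq_prod_map_letterVal, List.map_cons, List.prod_cons, ← wval_eq_prod_map_letterVal,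
      wval_coboundary_of_isWalk ρ l' w hw.2, letterVal_coboundary, ← hw.1, List.getLast_cons_cons,
      mul_comm, mul_assoc, inv_mul_cancel_left]

theorem wval_coboundary_of_isCycle (ρ : V → kˣ) {w : List (Letter A)} (hw : IsCycle s t w) :
    wval (fun a => ρ (t a) * (ρ (s a))⁻¹) w = 1 := by
  obtain ⟨hne, hwalk, hclosed⟩ := hw
  obtain ⟨l, w, rfl⟩ := List.exists_cons_of_ne_nil hne
  rw [wval_coboundary_of_isWalk ρ l w hwalk,
    hclosed l rfl _ (List.getLast?_eq_some_getLast (List.cons_ne_nil l w)), mul_inv_cancel]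

end Walks

section Potential

inductive WalkValue (s t : A → V) (φ : A → kˣ) : V → V → kˣ → Prop
  | refl (x : V) : WalkValue s t φ x x 1
  | cons (l : Letter A) {y : V} {u : kˣ} :
      WalkValue s t φ (ltgt s t l) y u → WalkValue s t φ (lsrc s t l) y (letterVal φ l * u)

variable {s t : A → V} {φ : A → kˣ}

namespace WalkValue

lemma single (l : Letter A) : WalkValue s t φ (lsrc s t l) (ltgt s t l) (letterVal φ l) := by
  simpa using cons l (refl _)

lemma trans {x y z : V} {u v : kˣ} (h : WalkValue s t φ x y u) (h' : WalkValue s t φ y z v) :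
    WalkValue s t φ x z (u * v) := by
  induction h with
  | refl => simpa using h'
  | cons l _ ih => simpa only [mul_assoc] using cons l (ih h')

lemma symm {x y : V} {u : kˣ} (h : WalkValue s t φ x y u) : WalkValue s t φ y x u⁻¹ := by
  induction h with
  | refl => simpa using refl _
  | cons l _ ih =>
    have back := single (s := s) (t := t) (φ := φ) (Letter.rev l)
    rw [lsrc_rev, ltgt_rev, letterVal_rev] at back
    simpa only [mul_inv_rev] using ih.trans back

lemma exists_walk {x y : V} {u : kˣ} (h : WalkValue s t φ x y u) :
    ∃ w : List (Letter A), IsWalk s t w ∧ wval φ w = u ∧ (w = [] → x = y) ∧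
      (∀ a ∈ w.head?, lsrc s t a = x) ∧ (∀ b ∈ w.getLast?, ltgt s t b = y) := by
  induction h with
  | refl x => exact ⟨[], List.isChain_nil, rfl, fun _ => rfl, by simp, by simp⟩
  | cons l _ ih =>
    obtain ⟨w, hw, hval, hnil, hhead, hlast⟩ := ih
    refine ⟨l :: w, ?_, by rw [← hval]; rfl, by simp, by simp, fun b hb => ?_⟩
    · rw [IsWalk, List.Chain', List.isChain_cons]
      exact ⟨fun a ha => (hhead a ha).symm, hw⟩
    · rw [List.getLast?_cons, Option.mem_some_iff] at hb
      cases hlast' : w.getLast? with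
      | none =>
        rw [hlast', Option.getD_none] at hb
        rw [← hb, hnil (List.getLast?_eq_none_iff.1 hlast')]
      | some b' =>
        rw [hlast', Option.getD_some] at hb
        exact hb ▸ hlast b' hlast'

variable (hcyc : ∀ w : List (Letter A), IsCycle s t w → wval φ w = 1)
include hcyc

lemma eq_one_of_loop {x : V} {u : kˣ} (h : WalkValue s t φ x x u) : u = 1 := by
  obtain ⟨w, hw, hval, -, hhead, hlast⟩ := h.exists_walk
  rw [← hval]
  cases w with
  | nil => rfl
  | cons l w =>
    exact hcyc _ ⟨List.cons_ne_nil l w, hw, fun a ha b hb => (hlast b hb).trans (hhead a ha).symm⟩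

lemma unique {x y : V} {u v : kˣ} (h : WalkValue s t φ x y u) (h' : WalkValue s t φ x y v) :
    u = v :=
  inv_mul_eq_one.1 (eq_one_of_loop hcyc (h.symm.trans h'))

end WalkValue

theorem exists_potential_of_wval_eq_one
    (hcyc : ∀ w : List (Letter A), IsCycle s t w → wval φ w = 1) :
    ∃ ρ : V → kˣ, ∀ a : A, ρ (t a) = ρ (s a) * φ a := by
  let conn : Setoid V :=
    ⟨fun x y => ∃ u, WalkValue s t φ x y u,
      ⟨fun x => ⟨1, .refl x⟩, fun ⟨u, h⟩ => ⟨u⁻¹, h.symm⟩,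
        fun ⟨u, h⟩ ⟨v, h'⟩ => ⟨u * v, h.trans h'⟩⟩⟩
  -- `ρ x` is the value of a walk to `x` from a fixed base point of its connected component
  choose ρ hρ using fun x => Quotient.mk_out (s := conn) x
  refine ⟨ρ, fun a => ?_⟩
  have arrow : WalkValue s t φ (s a) (t a) (φ a) := WalkValue.single (a, true)
  have base : (Quotient.mk conn (s a)).out = (Quotient.mk conn (t a)).out :=
    congrArg Quotient.out (Quotient.sound ⟨_, arrow⟩)
  have via := (hρ (s a)).trans arrow
  rw [base] at via
  exact WalkValue.unique hcyc (hρ (t a)) via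

end Potential

namespace LinAutOn

variable {σ : Equiv.Perm C} (G H : LinAutOn k C σ)

lemma map_zero (x y : C) : G.map (0 : x ⟶ y) = 0 := by
  simpa using G.map_smul (0 : k) (0 : x ⟶ y)

def twistedEqualizer (ρ : C → kˣ) (x y : C) : Submodule k (x ⟶ y) where
  carrier := {f | (ρ y : k) • G.map f = (ρ x : k) • H.map f}
  zero_mem' := by simp only [Set.mem_ofPred_eq, map_zero, smul_zero]
  add_mem' {f f'} hf hf' := by
    simp only [Set.mem_ofPred_eq, map_add, smul_add] at hf hf' ⊢
    rw [hf, hf']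
  smul_mem' r f hf := by
    simp only [Set.mem_ofPred_eq, map_smul] at hf ⊢
    rw [smul_comm (ρ y : k), hf, smul_comm]

variable {G H} {ρ : C → kˣ}

lemma mem_twistedEqualizer {x y : C} {f : x ⟶ y} :
    f ∈ G.twistedEqualizer H ρ x y ↔ (ρ y : k) • G.map f = (ρ x : k) • H.map f := Iff.rfl

lemma comp_mem_twistedEqualizer {x y z : C} {f : x ⟶ y} {f' : y ⟶ z}
    (hf : f ∈ G.twistedEqualizer H ρ x y) (hf' : f' ∈ G.twistedEqualizer H ρ y z) :
    f ≫ f' ∈ G.twistedEqualizer H ρ x z := by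
  rw [mem_twistedEqualizer] at hf hf' ⊢
  calc (ρ z : k) • G.map (f ≫ f') = G.map f ≫ ((ρ z : k) • G.map f') := by
        rw [G.map_comp, Linear.comp_smul]
    _ = ((ρ y : k) • G.map f) ≫ H.map f' := by rw [hf', Linear.comp_smul, Linear.smul_comp]
    _ = (ρ x : k) • H.map (f ≫ f') := by rw [hf, Linear.smul_comp, H.map_comp]

lemma twistedEqualizer_eq_top {Arr : Type} {src tgt : Arr → C} {bar : ∀ a : Arr, src a ⟶ tgt a}
    (hgen : ∀ x y : C, Submodule.span k {f : x ⟶ y | IsPathMap src tgt bar f} = ⊤)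
    (harr : ∀ a : Arr, bar a ∈ G.twistedEqualizer H ρ (src a) (tgt a)) (x y : C) :
    G.twistedEqualizer H ρ x y = ⊤ := by
  have hpath {x y : C} {f : x ⟶ y} (hf : IsPathMap src tgt bar f) :
      f ∈ G.twistedEqualizer H ρ x y := by
    induction hf with
    | id z => rw [mem_twistedEqualizer, G.map_id, H.map_id]
    | cons a _ _ ih => exact comp_mem_twistedEqualizer (harr a) ih
  exact eq_top_iff.2 (hgen x y ▸ Submodule.span_le.2 fun f hf => hpath hf)

end LinAutOn

/- `G` and `H` are the actions of `g` and `h` on morphisms, `σ` their common action on objects;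
condition (2)(a) is stated as `h(ᾱ) = c • g(ᾱ)`, which is equivalent to `(g⁻¹h)(ᾱ) = c • ᾱ`. -/
theorem stmt_7_general
    -- the quiver Q of R: its arrows generate all morphisms of R
    (Arr : Type) (src tgt : Arr → C) (bar : ∀ a : Arr, src a ⟶ tgt a)
    (hgen : ∀ x y : C,
      Submodule.span k {f : x ⟶ y | IsPathMap src tgt bar f} = ⊤)
    (σ : Equiv.Perm C) (G H : LinAutOn k C σ) :
    (∃ ρ : C → kˣ, ∀ (x y : C) (f : x ⟶ y),
        (ρ y : k) • G.map f = (ρ x : k) • H.map f) ↔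
    (∃ c : C → C → kˣ,
        (∀ a : Arr, H.map (bar a) = (c (src a) (tgt a) : k) • G.map (bar a)) ∧
        (∀ w : List (Letter Arr), IsCycle src tgt w →
          wval (fun a => c (src a) (tgt a)) w = 1)) := by
  constructor
  · rintro ⟨ρ, hρ⟩
    refine ⟨fun x y => ρ y * (ρ x)⁻¹, fun a => ?_, fun w hw => wval_coboundary_of_isCycle ρ hw⟩
    beta_reduce
    rw [mul_comm, Units.val_mul, mul_smul, hρ, Units.val_inv_eq_inv_val,
      inv_smul_smul₀ (ρ (src a)).ne_zero]
  · rintro ⟨c, hc, hcyc⟩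
    obtain ⟨ρ, hρ⟩ := exists_potential_of_wval_eq_one hcyc
    have harr (a : Arr) : bar a ∈ G.twistedEqualizer H ρ (src a) (tgt a) := by
      rw [LinAutOn.mem_twistedEqualizer, hρ, hc, Units.val_mul, mul_smul]
    exact ⟨ρ, fun x y f => (G.twistedEqualizer_eq_top hgen harr x y).ge Submodule.mem_top⟩

theorem stmt_7
    -- locally bounded: finite-dimensional Hom-spaces with finite support
    (hfd : ∀ x y : C, FiniteDimensional k (x ⟶ y))
    (hsupp : ∀ x : C, {y : C | Neighbour x y}.Finite)
    -- the quiver Q of R: its arrows generate all morphisms of R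
    (Arr : Type) (src tgt : Arr → C) (bar : ∀ a : Arr, src a ⟶ tgt a)
    (hgen : ∀ x y : C,
      Submodule.span k {f : x ⟶ y | IsPathMap src tgt bar f} = ⊤)
    (σ : Equiv.Perm C) (G H : LinAutOn k C σ) :
    (∃ ρ : C → kˣ, ∀ (x y : C) (f : x ⟶ y),
        (ρ y : k) • G.map f = (ρ x : k) • H.map f) ↔
    (∃ c : C → C → kˣ,
        (∀ a : Arr, H.map (bar a) = (c (src a) (tgt a) : k) • G.map (bar a)) ∧
        (∀ w : List (Letter Arr), IsCycle src tgt w →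
          wval (fun a => c (src a) (tgt a)) w = 1)) :=
  stmt_7_general Arr src tgt bar hgen σ G H
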